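/- For all real b, c > 0, the partial products ∏_{n=0}^{N} [((n+b)(n+(b+1)/2)(n+c/2)) / ((n+c)(n+(c+1)/2)(n+b/2))]^{u_n} converge as N → ∞ to 1. -/

import Mathlib

/-!
Let `T(x, y) = ∑ₙ uₙ (log (n + x) - log (n + y))`, convergent by Dirichlet's test since the
partial sums of `uₙ` are bounded. Splitting the series into even and odd terms with
`u₂ₘ = uₘ`, `u₂ₘ₊₁ = -uₘ` gives `T(x, y) = T(x/2, y/2) - T((x+1)/2, (y+1)/2)`. The logarithm
of the product tends to `T(b, c) + T((b+1)/2, (c+1)/2) - T(b/2, c/2)`, which is `0` by this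
identity.
-/

open Filter Finset Topology

/-- The Thue–Morse sequence with values `±1`: `u n = (-1)^(s₂ n)` where `s₂ n`
is the sum of the binary digits of `n`. -/
def u (n : ℕ) : ℤ := (-1) ^ (Nat.digits 2 n).sum

open Real

lemma u_two_mul (m : ℕ) : u (2 * m) = u m := by
  rcases Nat.eq_zero_or_pos m with rfl | hm
  · rfl
  · unfold u
    rw [Nat.digits_def' (by norm_num) (by omega)]
    simp [Nat.mul_mod_right]

lemma u_two_mul_add_one (m : ℕ) : u (2 * m + 1) = -u m := by
  unfold u
  rw [Nat.digits_def' (by norm_num) (by omega), show (2 * m + 1) % 2 = 1 by omega,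
    show (2 * m + 1) / 2 = m by omega]
  simp [pow_add]

lemma sum_range_two_mul_mul_u {R : Type*} [CommRing R] (f : ℕ → R) (M : ℕ) :
    ∑ n ∈ range (2 * M), f n * u n = ∑ m ∈ range M, (f (2 * m) - f (2 * m + 1)) * u m := by
  induction M with
  | zero => simp
  | succ M ih =>
    rw [show 2 * (M + 1) = 2 * M + 1 + 1 by ring, sum_range_succ, sum_range_succ, ih,
      sum_range_succ, u_two_mul, u_two_mul_add_one]
    push_cast
    ring

lemma sum_range_two_mul_u {R : Type*} [CommRing R] (M : ℕ) :
    ∑ n ∈ range (2 * M), (u n : R) = 0 := by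
  simpa using sum_range_two_mul_mul_u (fun _ => (1 : R)) M

lemma norm_sum_range_u_le_one (N : ℕ) : ‖∑ n ∈ range N, (u n : ℝ)‖ ≤ 1 := by
  obtain ⟨M, rfl | rfl⟩ := Nat.even_or_odd' N
  · simp [sum_range_two_mul_u]
  · rw [sum_range_succ, sum_range_two_mul_u, zero_add, u]
    simp

noncomputable def thueMorseLogSum (x y : ℝ) (N : ℕ) : ℝ :=
  ∑ n ∈ range N, (log (n + x) - log (n + y)) * u n

lemma thueMorseLogSum_swap (x y : ℝ) : thueMorseLogSum y x = -thueMorseLogSum x y := by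
  ext N
  simp only [thueMorseLogSum, Pi.neg_apply, ← sum_neg_distrib]
  exact sum_congr rfl fun n _ => by ring

lemma antitone_log_add_sub_log_add {x y : ℝ} (hy : 0 < y) (hyx : y ≤ x) :
    Antitone fun n : ℕ => log (n + x) - log (n + y) := by
  intro m n hmn
  have hx : 0 < x := hy.trans_le hyx
  have hmn' : (m : ℝ) ≤ n := by exact_mod_cast hmn
  have hratio : (n + x) / (n + y) ≤ (m + x) / (m + y) := by
    rw [div_le_div_iff₀ (by positivity) (by positivity)]
    nlinarith
  have := log_le_log (by positivity) hratio
  rwa [log_div (by positivity) (by positivity), log_div (by positivity) (by positivity)] at this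

lemma tendsto_log_add_sub_log_add (x y : ℝ) :
    Tendsto (fun n : ℕ => log (n + x) - log (n + y)) atTop (𝓝 0) := by
  have h := ((tendsto_log_comp_add_sub_log x).sub (tendsto_log_comp_add_sub_log y)).comp
    tendsto_natCast_atTop_atTop
  rw [sub_zero] at h
  exact h.congr fun n => by simp

lemma cauchySeq_thueMorseLogSum {x y : ℝ} (hx : 0 < x) (hy : 0 < y) :
    CauchySeq (thueMorseLogSum x y) := by
  wlog hyx : y ≤ x generalizing x y
  · rw [← neg_neg (thueMorseLogSum x y), ← thueMorseLogSum_swap]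
    exact (this hy hx (le_of_not_ge hyx)).neg
  exact (antitone_log_add_sub_log_add hy hyx).cauchySeq_series_mul_of_tendsto_zero_of_bounded
    (tendsto_log_add_sub_log_add x y) norm_sum_range_u_le_one

lemma thueMorseLogSum_two_mul {x y : ℝ} (hx : 0 < x) (hy : 0 < y) (M : ℕ) :
    thueMorseLogSum x y (2 * M) =
      thueMorseLogSum (x / 2) (y / 2) M - thueMorseLogSum ((x + 1) / 2) ((y + 1) / 2) M := by
  have log_two_mul_add : ∀ {z : ℝ}, 0 < z → ∀ m : ℕ, log (2 * m + z) = log 2 + log (m + z / 2) :=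
    fun {z} hz m => by
      rw [show 2 * (m : ℝ) + z = 2 * (m + z / 2) by ring, log_mul two_ne_zero (by positivity)]
  simp only [thueMorseLogSum, sum_range_two_mul_mul_u, ← sum_sub_distrib]
  refine sum_congr rfl fun m _ => ?_
  push_cast
  rw [add_assoc, add_assoc, log_two_mul_add hx, log_two_mul_add hy,
    log_two_mul_add (by positivity : 0 < 1 + x), log_two_mul_add (by positivity : 0 < 1 + y),
    add_comm 1 x, add_comm 1 y]
  ring

lemma tendsto_thueMorseLogSum_add_sub {b c : ℝ} (hb : 0 < b) (hc : 0 < c) :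
    Tendsto (fun N => thueMorseLogSum b c N + thueMorseLogSum ((b + 1) / 2) ((c + 1) / 2) N
      - thueMorseLogSum (b / 2) (c / 2) N) atTop (𝓝 0) := by
  obtain ⟨L, hL⟩ := cauchySeq_tendsto_of_complete (cauchySeq_thueMorseLogSum hb hc)
  obtain ⟨L₁, hL₁⟩ := cauchySeq_tendsto_of_complete <|
    cauchySeq_thueMorseLogSum (x := (b + 1) / 2) (y := (c + 1) / 2) (by positivity) (by positivity)
  obtain ⟨L₀, hL₀⟩ := cauchySeq_tendsto_of_complete <|
    cauchySeq_thueMorseLogSum (x := b / 2) (y := c / 2) (by positivity) (by positivity)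
  have hdouble : L = L₀ - L₁ := by
    refine tendsto_nhds_unique ?_ (hL₀.sub hL₁)
    have h2 : Tendsto (fun M : ℕ => 2 * M) atTop atTop :=
      tendsto_atTop_mono (fun n => Nat.le_mul_of_pos_left n two_pos) tendsto_id
    exact (hL.comp h2).congr (thueMorseLogSum_two_mul hb hc)
  have h := (hL.add hL₁).sub hL₀
  rwa [hdouble, sub_add_cancel, sub_self] at h

lemma prod_zpow_eq_exp_sum_log {ι : Type*} (s : Finset ι) (r : ι → ℝ) (k : ι → ℤ)
    (hr : ∀ i ∈ s, 0 < r i) : ∏ i ∈ s, r i ^ k i = exp (∑ i ∈ s, log (r i) * k i) := by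
  rw [exp_sum]
  refine prod_congr rfl fun i hi => ?_
  rw [mul_comm, ← log_zpow, exp_log (zpow_pos (hr i hi) _)]

/-- For `b, c > 0`, the partial products
`∏_{n=0}^{N} [((n+b)(n+(b+1)/2)(n+c/2)) / ((n+c)(n+(c+1)/2)(n+b/2))]^{u_n}`
converge to `1`. -/
theorem stmt_15 (b c : ℝ) (hb : 0 < b) (hc : 0 < c) :
    Tendsto (fun N : ℕ => ∏ n ∈ Finset.range (N + 1),
      ((((n : ℝ) + b) * ((n : ℝ) + (b + 1) / 2) * ((n : ℝ) + c / 2)) /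
        (((n : ℝ) + c) * ((n : ℝ) + (c + 1) / 2) * ((n : ℝ) + b / 2))) ^ (u n))
      atTop (𝓝 1) := by
  have hprod : ∀ N : ℕ, ∏ n ∈ range (N + 1),
      ((((n : ℝ) + b) * ((n : ℝ) + (b + 1) / 2) * ((n : ℝ) + c / 2)) /
        (((n : ℝ) + c) * ((n : ℝ) + (c + 1) / 2) * ((n : ℝ) + b / 2))) ^ (u n)
      = exp (thueMorseLogSum b c (N + 1) + thueMorseLogSum ((b + 1) / 2) ((c + 1) / 2) (N + 1)
          - thueMorseLogSum (b / 2) (c / 2) (N + 1)) := by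
    intro N
    rw [prod_zpow_eq_exp_sum_log _ _ _ fun n _ => by positivity]
    simp only [thueMorseLogSum, ← sum_add_distrib, ← sum_sub_distrib]
    refine congrArg exp (sum_congr rfl fun n _ => ?_)
    rw [log_div (by positivity) (by positivity), log_mul (by positivity) (by positivity),
      log_mul (by positivity) (by positivity), log_mul (by positivity) (by positivity),
      log_mul (by positivity) (by positivity)]
    ring
  have h := (continuous_exp.tendsto 0).comp
    ((tendsto_thueMorseLogSum_add_sub hb hc).comp (tendsto_add_atTop_nat 1))
  rw [exp_zero] at h
  exact h.congr fun N => (hprod N).symm
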